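/- arXiv:math/0702094 — 2 statements merged into one kernel-verified Lean document; each statement's English description precedes it below -/
import Mathlib

section
/- No inner product on AS¹(ℝ) induces a reparametrization invariant norm: there is no real inner product ⟨·,·⟩ on the vector space AS¹(ℝ) such that the norm φ ↦ √⟨φ, φ⟩ is a reparametrization invariant norm. -/
open MeasureTheory Set

noncomputable section

/-- The function `S` of the paper. -/
def Sfun (t : ℝ) : ℝ :=
  if t ≤ -1 then 0
  else if t ≤ 0 then (t + 1) ^ 2 / 2
  else if t ≤ 1 then 1 - (t - 1) ^ 2 / 2
  else 1

/-- The function `Λ` of the paper. -/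
def Lam (t : ℝ) : ℝ := Sfun (t + 1) - Sfun (t - 1)

/-- Almost sigmoidal functions of class `C¹`. -/
def AS1 (φ : ℝ → ℝ) : Prop :=
  ContDiff ℝ 1 φ ∧
    ∃ a b : ℝ, a ≤ b ∧ (∀ t ≤ a, φ t = 0) ∧ ∀ t, b ≤ t → φ t = φ b

/-- Orientation-preserving `C¹`-diffeomorphisms of `ℝ`. -/
def OPDiffeo (h : ℝ → ℝ) : Prop :=
  ContDiff ℝ 1 h ∧ Function.Bijective h ∧
    (∃ g : ℝ → ℝ, ContDiff ℝ 1 g ∧ Function.LeftInverse g h ∧ Function.RightInverse g h) ∧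
    ∀ t, 0 < deriv h t

/-- Total variation `V_φ = ∫ |φ'|`. -/
def totalVar (φ : ℝ → ℝ) : ℝ := ∫ t, |deriv φ t|

/-- A reparametrization invariant norm on `AS¹(ℝ)`. -/
structure IsRPINorm (N : (ℝ → ℝ) → ℝ) : Prop where
  nonneg : ∀ φ, AS1 φ → 0 ≤ N φ
  eq_zero_iff : ∀ φ, AS1 φ → (N φ = 0 ↔ ∀ t, φ t = 0)
  smul : ∀ (c : ℝ) (φ : ℝ → ℝ), AS1 φ → N (fun t => c * φ t) = |c| * N φ
  triangle : ∀ φ ψ : ℝ → ℝ, AS1 φ → AS1 ψ → N (fun t => φ t + ψ t) ≤ N φ + N ψ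
  invariant : ∀ (φ h : ℝ → ℝ), AS1 φ → OPDiffeo h → N (φ ∘ h) = N φ

/-- The standard RPI-norm `‖φ‖_[ψ]`. -/
def stdNorm (ψ φ : ℝ → ℝ) : ℝ :=
  ⨆ h : {h : ℝ → ℝ // OPDiffeo h}, |∫ t, φ (-t) * deriv (ψ ∘ h.1) t|

/-- The function `S_n`. -/
def Sn (n : ℕ) : ℝ → ℝ := fun t => ∑ i ∈ Finset.range n, (-1 : ℝ) ^ i * Sfun (t - 2 * (i : ℝ))

/-- The function `L_n`. -/
def Lfun (n : ℕ) : ℝ → ℝ := fun t => ∑ i ∈ Finset.range n, (-1 : ℝ) ^ i * Lam (t - 4 * (i : ℝ))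

/-- `W` is a separating set for `f`: `f` is monotone on each connected component of `ℝ \ W`. -/
def IsSepSet (f : ℝ → ℝ) (W : Finset ℝ) : Prop :=
  ∀ t, t ∉ (W : Set ℝ) →
    MonotoneOn f (connectedComponentIn ((W : Set ℝ)ᶜ) t) ∨
      AntitoneOn f (connectedComponentIn ((W : Set ℝ)ᶜ) t)

/-- `f` is piecewise monotone. -/
def PiecewiseMonotone (f : ℝ → ℝ) : Prop := ∃ W : Finset ℝ, IsSepSet f W

/-- `l(f)`: the minimum cardinality of a separating set for `f`. -/
def lval (f : ℝ → ℝ) : ℕ := sInf {n : ℕ | ∃ W : Finset ℝ, W.card = n ∧ IsSepSet f W}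

/-!
Suppose `‖φ‖ = √⟪φ, φ⟫` were reparametrization invariant, and let `u = Sfun`, `v = Sfun (· - 1)`.
Translation is a reparametrization, so `‖v‖ = ‖u‖`. The sum `u + v` rises from `0` to `2` with
the same quadratic contact at both ends as `2 u`, and indeed `(u + v) ∘ g = 2 u` for an explicit
`C¹` diffeomorphism `g`, so `‖u + v‖ = 2 ‖u‖`. The parallelogram law now gives `‖u - v‖ = 0`,
although `u 1 = 1` and `v 1 = 1 / 2`.
-/

open Filter

lemma AS1.add {φ ψ : ℝ → ℝ} (hφ : AS1 φ) (hψ : AS1 ψ) : AS1 (fun t => φ t + ψ t) := by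
  obtain ⟨hφ, a, b, hab, ha, hb⟩ := hφ
  obtain ⟨hψ, a', b', hab', ha', hb'⟩ := hψ
  refine ⟨hφ.add hψ, min a a', max b b', (min_le_left _ _).trans (hab.trans (le_max_left _ _)),
    fun t ht => ?_, fun t ht => ?_⟩
  · dsimp only
    rw [ha t (ht.trans (min_le_left _ _)), ha' t (ht.trans (min_le_right _ _)), add_zero]
  · dsimp only
    rw [hb t (le_of_max_le_left ht), hb' t (le_of_max_le_right ht), hb _ (le_max_left _ _),
      hb' _ (le_max_right _ _)]

lemma AS1.const_mul {φ : ℝ → ℝ} (hφ : AS1 φ) (c : ℝ) : AS1 (fun t => c * φ t) := by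
  obtain ⟨hφ, a, b, hab, ha, hb⟩ := hφ
  exact ⟨contDiff_const.mul hφ, a, b, hab, fun t ht => by dsimp only; rw [ha t ht, mul_zero],
    fun t ht => by dsimp only; rw [hb t ht]⟩

lemma AS1.comp_sub_const {φ : ℝ → ℝ} (hφ : AS1 φ) (d : ℝ) : AS1 (fun t => φ (t - d)) := by
  obtain ⟨hφ, a, b, hab, ha, hb⟩ := hφ
  refine ⟨hφ.comp (contDiff_id.sub contDiff_const), a + d, b + d, by linarith,
    fun t ht => ha _ (by linarith), fun t ht => ?_⟩
  dsimp only
  rw [add_sub_cancel_right, hb _ (by linarith)]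

lemma inn_add_mul_self {inn : (ℝ → ℝ) → (ℝ → ℝ) → ℝ}
    (hsym : ∀ φ ψ, AS1 φ → AS1 ψ → inn φ ψ = inn ψ φ)
    (hadd : ∀ φ ψ χ, AS1 φ → AS1 ψ → AS1 χ → inn (fun t => φ t + ψ t) χ = inn φ χ + inn ψ χ)
    (hsmul : ∀ (c : ℝ) (φ ψ), AS1 φ → AS1 ψ → inn (fun t => c * φ t) ψ = c * inn φ ψ)
    {u v : ℝ → ℝ} (hu : AS1 u) (hv : AS1 v) (c : ℝ) :
    inn (fun t => u t + c * v t) (fun t => u t + c * v t) =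
      inn u u + 2 * c * inn u v + c ^ 2 * inn v v := by
  have hcv := hv.const_mul c
  have hw := hu.add hcv
  have hu_w : inn u (fun t => u t + c * v t) = inn u u + c * inn u v := by
    rw [hsym _ _ hu hw, hadd _ _ _ hu hcv hu, hsmul _ _ _ hv hu, hsym _ _ hv hu]
  have hcv_w :
      inn (fun t => c * v t) (fun t => u t + c * v t) = c * inn u v + c ^ 2 * inn v v := by
    rw [hsmul _ _ _ hv hw, hsym _ _ hv hw, hadd _ _ _ hu hcv hv, hsmul _ _ _ hv hv]
    ring
  rw [hadd _ _ _ hu hcv hw, hu_w, hcv_w]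
  ring

lemma tendsto_atTop_of_le_deriv {g : ℝ → ℝ} {c : ℝ} (hc : 0 < c) (hg : Differentiable ℝ g)
    (hg' : ∀ t, c ≤ deriv g t) : Tendsto g atTop atTop := by
  refine tendsto_atTop_mono' _ ?_ (tendsto_atTop_add_const_left _ (g 0)
    (tendsto_id.const_mul_atTop hc))
  filter_upwards [eventually_ge_atTop 0] with t ht
  have := mul_sub_le_image_sub_of_le_deriv hg hg' ht
  rw [sub_zero] at this
  rw [id_eq]
  linarith

lemma tendsto_atBot_of_le_deriv {g : ℝ → ℝ} {c : ℝ} (hc : 0 < c) (hg : Differentiable ℝ g)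
    (hg' : ∀ t, c ≤ deriv g t) : Tendsto g atBot atBot := by
  refine tendsto_atBot_mono' _ ?_ (tendsto_atBot_add_const_left _ (g 0)
    (tendsto_id.const_mul_atBot hc))
  filter_upwards [eventually_le_atBot 0] with t ht
  have := mul_sub_le_image_sub_of_le_deriv hg hg' ht
  rw [zero_sub, mul_neg] at this
  rw [id_eq]
  linarith

lemma OPDiffeo.of_le_deriv {g : ℝ → ℝ} {c : ℝ} (hc : 0 < c) (hg : ContDiff ℝ 1 g)
    (hg' : ∀ t, c ≤ deriv g t) : OPDiffeo g := by
  have hdiff : Differentiable ℝ g := hg.differentiable one_ne_zero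
  have hpos : ∀ t, 0 < deriv g t := fun t => hc.trans_le (hg' t)
  have hmono : StrictMono g := strictMono_of_deriv_pos hpos
  have hsurj : Function.Surjective g := hdiff.continuous.surjective
    (tendsto_atTop_of_le_deriv hc hdiff hg') (tendsto_atBot_of_le_deriv hc hdiff hg')
  set e := StrictMono.orderIsoOfSurjective g hmono hsurj
  have hinv : ∀ y, HasDerivAt e.symm (deriv g (e.symm y))⁻¹ y := fun y =>
    HasDerivAt.of_local_left_inverse e.symm.continuous.continuousAt
      (hdiff _).hasDerivAt (hpos _).ne' (Eventually.of_forall e.apply_symm_apply)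
  refine ⟨hg, ⟨hmono.injective, hsurj⟩, ⟨e.symm, ?_, e.symm_apply_apply, e.apply_symm_apply⟩, hpos⟩
  rw [contDiff_one_iff_deriv, funext fun y => (hinv y).deriv]
  exact ⟨fun y => (hinv y).differentiableAt,
    ((hg.continuous_deriv le_rfl).comp e.symm.continuous).inv₀ fun y => (hpos _).ne'⟩

lemma opDiffeo_sub_const (d : ℝ) : OPDiffeo (fun t => t - d) :=
  OPDiffeo.of_le_deriv one_pos (by fun_prop) fun t => by simp

lemma hasDerivAt_max_zero_sq (x : ℝ) :
    HasDerivAt (fun y : ℝ => max y 0 ^ 2) (2 * max x 0) x := by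
  rcases lt_trichotomy x 0 with hx | rfl | hx
  · rw [max_eq_right hx.le, mul_zero]
    refine (hasDerivAt_const x 0).congr_of_eventuallyEq ?_
    filter_upwards [Iio_mem_nhds hx] with y hy
    rw [max_eq_right (le_of_lt hy), zero_pow two_ne_zero]
  · have hleft : HasDerivWithinAt (fun y : ℝ => max y 0 ^ 2) 0 (Iic 0) 0 :=
      (hasDerivWithinAt_const 0 _ 0).congr (fun y hy => by rw [max_eq_right hy]; ring)
        (by norm_num)
    have hright : HasDerivWithinAt (fun y : ℝ => max y 0 ^ 2) 0 (Ici 0) 0 := by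
      have := (hasDerivAt_pow 2 (0 : ℝ)).hasDerivWithinAt (s := Ici 0)
      exact (this.congr (fun y hy => by rw [max_eq_left hy]) (by norm_num)).congr_deriv
        (by norm_num)
    rw [max_self, mul_zero, ← hasDerivWithinAt_univ, ← Iic_union_Ici]
    exact hleft.union hright
  · rw [max_eq_left hx.le]
    refine ((hasDerivAt_pow 2 x).congr_deriv (by ring)).congr_of_eventuallyEq ?_
    filter_upwards [Ioi_mem_nhds hx] with y hy
    rw [max_eq_left (le_of_lt hy)]

lemma Sfun_of_le_neg_one {t : ℝ} (ht : t ≤ -1) : Sfun t = 0 := by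
  simp [Sfun, ht]

lemma Sfun_of_mem_Icc_neg_one_zero {t : ℝ} (h₁ : -1 ≤ t) (h₂ : t ≤ 0) :
    Sfun t = (t + 1) ^ 2 / 2 := by
  unfold Sfun; split_ifs <;> nlinarith

lemma Sfun_of_mem_Icc_zero_one {t : ℝ} (h₁ : 0 ≤ t) (h₂ : t ≤ 1) :
    Sfun t = 1 - (t - 1) ^ 2 / 2 := by
  unfold Sfun; split_ifs <;> nlinarith

lemma Sfun_of_one_le {t : ℝ} (ht : 1 ≤ t) : Sfun t = 1 := by
  unfold Sfun; split_ifs <;> nlinarith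

lemma Sfun_eq_max_zero_sq (t : ℝ) :
    Sfun t = max (t + 1) 0 ^ 2 / 2 - max t 0 ^ 2 + max (t - 1) 0 ^ 2 / 2 := by
  rcases le_total t (-1) with h₁ | h₁
  · rw [Sfun_of_le_neg_one h₁, max_eq_right (by linarith), max_eq_right (by linarith),
      max_eq_right (by linarith)]
    ring
  rcases le_total t 0 with h₂ | h₂
  · rw [Sfun_of_mem_Icc_neg_one_zero h₁ h₂, max_eq_left (by linarith), max_eq_right h₂,
      max_eq_right (by linarith)]
    ring
  rcases le_total t 1 with h₃ | h₃
  · rw [Sfun_of_mem_Icc_zero_one h₂ h₃, max_eq_left (by linarith), max_eq_left h₂,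
      max_eq_right (by linarith)]
    ring
  · rw [Sfun_of_one_le h₃, max_eq_left (by linarith), max_eq_left h₂, max_eq_left (by linarith)]
    ring

lemma hasDerivAt_Sfun (t : ℝ) :
    HasDerivAt Sfun (max (t + 1) 0 - 2 * max t 0 + max (t - 1) 0) t := by
  rw [funext Sfun_eq_max_zero_sq]
  have h₁ := ((hasDerivAt_max_zero_sq _).comp_add_const t 1).div_const 2
  have h₂ := hasDerivAt_max_zero_sq t
  have h₃ := ((hasDerivAt_max_zero_sq _).comp_sub_const t 1).div_const 2
  exact ((h₁.sub h₂).add h₃).congr_deriv (by ring)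

lemma contDiff_Sfun : ContDiff ℝ 1 Sfun := by
  rw [contDiff_one_iff_deriv, funext fun t => (hasDerivAt_Sfun t).deriv]
  exact ⟨fun t => (hasDerivAt_Sfun t).differentiableAt, by fun_prop⟩

lemma as1_Sfun : AS1 Sfun :=
  ⟨contDiff_Sfun, -1, 1, by norm_num, fun _ ht => Sfun_of_le_neg_one ht,
    fun _ ht => by rw [Sfun_of_one_le ht, Sfun_of_one_le le_rfl]⟩

/-- Its derivative is the tent `2 * min (y + 1) (1 - y)` clipped below at `√2`. -/
def pairReparam (y : ℝ) : ℝ :=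
  √2 * (y + 1) - 1 + max (y + (1 - √2 / 2)) 0 ^ 2 - 2 * max y 0 ^ 2 +
    max (y - (1 - √2 / 2)) 0 ^ 2

lemma hasDerivAt_pairReparam (y : ℝ) :
    HasDerivAt pairReparam
      (√2 + 2 * max (y + (1 - √2 / 2)) 0 - 4 * max y 0 + 2 * max (y - (1 - √2 / 2)) 0) y := by
  have h₀ := (((hasDerivAt_id y).add_const 1).const_mul √2).sub_const 1
  have h₁ := (hasDerivAt_max_zero_sq _).comp_add_const y (1 - √2 / 2)
  have h₂ := (hasDerivAt_max_zero_sq y).const_mul 2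
  have h₃ := (hasDerivAt_max_zero_sq _).comp_sub_const y (1 - √2 / 2)
  exact (((h₀.add h₁).sub h₂).add h₃).congr_deriv (by ring)

lemma contDiff_pairReparam : ContDiff ℝ 1 pairReparam := by
  rw [contDiff_one_iff_deriv, funext fun y => (hasDerivAt_pairReparam y).deriv]
  exact ⟨fun y => (hasDerivAt_pairReparam y).differentiableAt, by fun_prop⟩

lemma sqrt_two_le_deriv_pairReparam (y : ℝ) : √2 ≤ deriv pairReparam y := by
  rw [(hasDerivAt_pairReparam y).deriv]
  have hconvex : 2 * max y 0 ≤ max (y + (1 - √2 / 2)) 0 + max (y - (1 - √2 / 2)) 0 := by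
    rcases le_total y 0 with hy | hy
    · rw [max_eq_right hy, mul_zero]; positivity
    · rw [max_eq_left hy]
      linarith [le_max_left (y + (1 - √2 / 2)) 0, le_max_left (y - (1 - √2 / 2)) 0]
  linarith

lemma opDiffeo_pairReparam : OPDiffeo pairReparam :=
  OPDiffeo.of_le_deriv (by positivity) contDiff_pairReparam sqrt_two_le_deriv_pairReparam

lemma pairReparam_of_le {y : ℝ} (hy : y ≤ -(1 - √2 / 2)) : pairReparam y = √2 * (y + 1) - 1 := by
  have := Real.sqrt_two_lt_three_halves
  rw [pairReparam, max_eq_right (by linarith), max_eq_right (by linarith),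
    max_eq_right (by linarith)]
  ring

lemma pairReparam_of_mem_Icc_neg {y : ℝ} (h₁ : -(1 - √2 / 2) ≤ y) (h₂ : y ≤ 0) :
    pairReparam y = (y + 1) ^ 2 - 1 / 2 := by
  have := Real.sqrt_two_lt_three_halves
  rw [pairReparam, max_eq_left (by linarith), max_eq_right h₂, max_eq_right (by linarith)]
  linear_combination (1 / 4 : ℝ) * Real.sq_sqrt zero_le_two

lemma pairReparam_of_mem_Icc_pos {y : ℝ} (h₁ : 0 ≤ y) (h₂ : y ≤ 1 - √2 / 2) :
    pairReparam y = 3 / 2 - (1 - y) ^ 2 := by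
  rw [pairReparam, max_eq_left (by linarith), max_eq_left h₁, max_eq_right (by linarith)]
  linear_combination (1 / 4 : ℝ) * Real.sq_sqrt zero_le_two

lemma pairReparam_of_ge {y : ℝ} (hy : 1 - √2 / 2 ≤ y) : pairReparam y = 2 + √2 * (y - 1) := by
  have := Real.sqrt_two_lt_three_halves
  rw [pairReparam, max_eq_left (by linarith), max_eq_left (by linarith),
    max_eq_left (by linarith)]
  linear_combination (1 / 2 : ℝ) * Real.sq_sqrt zero_le_two

lemma Sfun_pairReparam_add (y : ℝ) :
    Sfun (pairReparam y) + Sfun (pairReparam y - 1) = 2 * Sfun y := by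
  have hs : √2 ^ 2 = 2 := Real.sq_sqrt zero_le_two
  have hs₁ := Real.one_lt_sqrt_two
  have hs₂ := Real.sqrt_two_lt_three_halves
  rcases le_total y (-1) with h₁ | h₁
  · rw [pairReparam_of_le (by linarith), Sfun_of_le_neg_one h₁,
      Sfun_of_le_neg_one (by nlinarith), Sfun_of_le_neg_one (by nlinarith)]
    ring
  rcases le_total y (-(1 - √2 / 2)) with h₂ | h₂
  · rw [pairReparam_of_le h₂, Sfun_of_mem_Icc_neg_one_zero h₁ (by linarith),
      Sfun_of_mem_Icc_neg_one_zero (by nlinarith) (by nlinarith),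
      Sfun_of_le_neg_one (by nlinarith)]
    linear_combination (y + 1) ^ 2 / 2 * hs
  rcases le_total y 0 with h₃ | h₃
  · rw [pairReparam_of_mem_Icc_neg h₂ h₃, Sfun_of_mem_Icc_neg_one_zero h₁ h₃,
      Sfun_of_mem_Icc_zero_one (by nlinarith) (by nlinarith),
      Sfun_of_mem_Icc_neg_one_zero (by nlinarith) (by nlinarith)]
    ring
  rcases le_total y (1 - √2 / 2) with h₄ | h₄
  · rw [pairReparam_of_mem_Icc_pos h₃ h₄, Sfun_of_mem_Icc_zero_one h₃ (by linarith),
      Sfun_of_mem_Icc_zero_one (by nlinarith) (by nlinarith),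
      Sfun_of_mem_Icc_neg_one_zero (by nlinarith) (by nlinarith)]
    ring
  rcases le_total y 1 with h₅ | h₅
  · rw [pairReparam_of_ge h₄, Sfun_of_mem_Icc_zero_one h₃ h₅, Sfun_of_one_le (by nlinarith),
      Sfun_of_mem_Icc_zero_one (by nlinarith) (by nlinarith)]
    linear_combination -(y - 1) ^ 2 / 2 * hs
  · rw [pairReparam_of_ge h₄, Sfun_of_one_le h₅, Sfun_of_one_le (by nlinarith),
      Sfun_of_one_le (by nlinarith)]
    ring

theorem statement6 :
    ¬ ∃ inn : (ℝ → ℝ) → (ℝ → ℝ) → ℝ,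
      (∀ φ ψ, AS1 φ → AS1 ψ → inn φ ψ = inn ψ φ) ∧
      (∀ φ ψ χ, AS1 φ → AS1 ψ → AS1 χ →
        inn (fun t => φ t + ψ t) χ = inn φ χ + inn ψ χ) ∧
      (∀ (c : ℝ) (φ ψ), AS1 φ → AS1 ψ → inn (fun t => c * φ t) ψ = c * inn φ ψ) ∧
      (∀ φ, AS1 φ → 0 ≤ inn φ φ) ∧
      IsRPINorm (fun φ => Real.sqrt (inn φ φ)) := by
  rintro ⟨inn, hsym, hadd, hsmul, hnonneg, hN⟩
  have hu := as1_Sfun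
  have hv := hu.comp_sub_const 1
  have hvv : inn (fun t => Sfun (t - 1)) (fun t => Sfun (t - 1)) = inn Sfun Sfun :=
    (Real.sqrt_inj (hnonneg _ hv) (hnonneg _ hu)).1
      (hN.invariant Sfun _ hu (opDiffeo_sub_const 1))
  have hsum : inn (fun t => Sfun t + Sfun (t - 1)) (fun t => Sfun t + Sfun (t - 1)) =
      4 * inn Sfun Sfun := by
    have hinv := hN.invariant _ _ (hu.add hv) opDiffeo_pairReparam
    rw [show (fun t => Sfun t + Sfun (t - 1)) ∘ pairReparam = fun y => 2 * Sfun y from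
      funext Sfun_pairReparam_add, hN.smul 2 Sfun hu, abs_two] at hinv
    have hsq := congrArg (· ^ 2) hinv
    simp only [mul_pow, Real.sq_sqrt (hnonneg _ hu), Real.sq_sqrt (hnonneg _ (hu.add hv))] at hsq
    linarith
  have hplus := inn_add_mul_self hsym hadd hsmul hu hv 1
  have hminus := inn_add_mul_self hsym hadd hsmul hu hv (-1)
  simp only [one_mul] at hplus
  have hdiff :
      inn (fun t => Sfun t + -1 * Sfun (t - 1)) (fun t => Sfun t + -1 * Sfun (t - 1)) = 0 := by
    linarith
  have hzero := (hN.eq_zero_iff _ (hu.add (hv.const_mul (-1)))).1 (by rw [hdiff, Real.sqrt_zero]) 1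
  norm_num [Sfun] at hzero
end
end

section
/- Exchange property: for all φ, ψ ∈ AS¹(ℝ), both not identically zero, one has ‖φ‖_[ψ] = ‖ψ‖_[φ], and also ‖φ‖_[ψ] = ‖φ‖_[−ψ]. -/
open MeasureTheory Set

noncomputable section

/-
Let `g = h⁻¹` and `k s = -g (-s)`, again an orientation-preserving diffeomorphism. Substituting
`x = h t` turns `∫ φ (-t) (ψ ∘ h)' t dt` into `∫ φ (-g x) ψ' x dx`; reflecting `t ↦ -t` and
integrating by parts (the boundary terms vanish because `ψ` vanishes near `-∞` and `φ (-g x)`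
near `+∞`) turns `∫ ψ (-t) (φ ∘ k)' t dt` into the same integral. Hence `‖φ‖_[ψ]` and `‖ψ‖_[φ]`
are suprema of the same set of numbers. Replacing `ψ` by `-ψ` only flips the sign of each integral.
-/

open Filter Topology Function

theorem iSup_eq_iSup_of_forall_exists {α ι ι' : Type*} [SupSet α] {f : ι → α} {g : ι' → α}
    (hfg : ∀ i, ∃ j, g j = f i) (hgf : ∀ j, ∃ i, f i = g j) : ⨆ i, f i = ⨆ j, g j :=
  congrArg sSup <| Subset.antisymm (by rintro _ ⟨i, rfl⟩; exact hfg i)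
    (by rintro _ ⟨j, rfl⟩; exact hgf j)

theorem deriv_eventuallyEq_zero_atTop {f : ℝ → ℝ} {c : ℝ} (hf : f =ᶠ[atTop] fun _ => c) :
    deriv f =ᶠ[atTop] 0 := by
  obtain ⟨b, hb⟩ := eventually_atTop.1 hf
  filter_upwards [eventually_gt_atTop b] with t ht
  have hconst : f =ᶠ[𝓝 t] fun _ => c := eventually_of_mem (Ioi_mem_nhds ht) fun x hx => hb x hx.le
  simp [hconst.deriv_eq]

theorem deriv_eventuallyEq_zero_atBot {f : ℝ → ℝ} {c : ℝ} (hf : f =ᶠ[atBot] fun _ => c) :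
    deriv f =ᶠ[atBot] 0 := by
  obtain ⟨a, ha⟩ := eventually_atBot.1 hf
  filter_upwards [eventually_lt_atBot a] with t ht
  have hconst : f =ᶠ[𝓝 t] fun _ => c := eventually_of_mem (Iio_mem_nhds ht) fun x hx => ha x hx.le
  simp [hconst.deriv_eq]

theorem hasCompactSupport_of_eventuallyEq_zero {f : ℝ → ℝ} (hbot : f =ᶠ[atBot] 0)
    (htop : f =ᶠ[atTop] 0) : HasCompactSupport f := by
  rw [hasCompactSupport_iff_eventuallyEq, coclosedCompact_eq_cocompact, cocompact_eq_atBot_atTop]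
  exact eventually_sup.2 ⟨hbot, htop⟩

theorem hasCompactSupport_deriv_of_eventuallyEq {f : ℝ → ℝ} {c d : ℝ}
    (hbot : f =ᶠ[atBot] fun _ => c) (htop : f =ᶠ[atTop] fun _ => d) :
    HasCompactSupport (deriv f) :=
  hasCompactSupport_of_eventuallyEq_zero (deriv_eventuallyEq_zero_atBot hbot)
    (deriv_eventuallyEq_zero_atTop htop)

theorem integral_mul_deriv_eq_neg_integral_deriv_mul {u v : ℝ → ℝ} (hu : ContDiff ℝ 1 u)
    (hv : ContDiff ℝ 1 v) (hu' : HasCompactSupport (deriv u)) (hv' : HasCompactSupport (deriv v))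
    (huv : HasCompactSupport (u * v)) :
    ∫ x, u x * deriv v x = -∫ x, deriv u x * v x :=
  integral_mul_deriv_eq_deriv_mul_of_integrable
    (fun x _ => (hu.differentiable one_ne_zero x).hasDerivAt)
    (fun x _ => (hv.differentiable one_ne_zero x).hasDerivAt)
    ((hu.continuous.mul (hv.continuous_deriv le_rfl)).integrable_of_hasCompactSupport hv'.mul_left)
    (((hu.continuous_deriv le_rfl).mul hv.continuous).integrable_of_hasCompactSupport
      hu'.mul_right)
    ((hu.continuous.mul hv.continuous).integrable_of_hasCompactSupport huv)

theorem integral_mul_deriv_comp_eq {h g ψ : ℝ → ℝ} (F : ℝ → ℝ) (hd : Differentiable ℝ h)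
    (hmono : StrictMono h) (hsurj : Surjective h) (hgh : LeftInverse g h)
    (hψ : Differentiable ℝ ψ) :
    ∫ t, F t * deriv (ψ ∘ h) t = ∫ x, F (g x) * deriv ψ x := by
  have hcov := integral_image_eq_integral_abs_deriv_smul MeasurableSet.univ
    (fun t _ => (hd t).hasDerivAt.hasDerivWithinAt) hmono.injective.injOn
    (fun x => F (g x) * deriv ψ x)
  rw [image_univ, hsurj.range_eq, Measure.restrict_univ] at hcov
  rw [hcov]
  refine integral_congr_ae (Eventually.of_forall fun t => ?_)
  simp only [smul_eq_mul, hgh t, abs_of_nonneg (hmono.monotone.deriv_nonneg),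
    deriv_comp t (hψ (h t)) (hd t)]
  ring

namespace AS1

variable {φ : ℝ → ℝ}

theorem eventuallyEq_zero_atBot (hφ : AS1 φ) : φ =ᶠ[atBot] 0 := by
  obtain ⟨-, a, -, -, ha, -⟩ := hφ
  exact eventually_atBot.2 ⟨a, ha⟩

theorem eventuallyEq_atTop (hφ : AS1 φ) : ∃ c, φ =ᶠ[atTop] fun _ => c := by
  obtain ⟨-, -, b, -, -, hb⟩ := hφ
  exact ⟨φ b, eventually_atTop.2 ⟨b, hb⟩⟩

theorem hasCompactSupport_deriv (hφ : AS1 φ) : HasCompactSupport (deriv φ) :=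
  have ⟨_, htop⟩ := hφ.eventuallyEq_atTop
  hasCompactSupport_deriv_of_eventuallyEq hφ.eventuallyEq_zero_atBot htop

end AS1

namespace OPDiffeo

variable {h : ℝ → ℝ}

theorem strictMono (hh : OPDiffeo h) : StrictMono h :=
  strictMono_of_deriv_pos hh.2.2.2

theorem tendsto_atTop (hh : OPDiffeo h) : Tendsto h atTop atTop :=
  tendsto_atTop_atTop_of_monotone hh.strictMono.monotone fun y =>
    ⟨_, (hh.2.1.2 y).choose_spec.ge⟩

theorem tendsto_atBot (hh : OPDiffeo h) : Tendsto h atBot atBot :=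
  tendsto_atBot_atBot_of_monotone hh.strictMono.monotone fun y =>
    ⟨_, (hh.2.1.2 y).choose_spec.le⟩

theorem of_inverse {g : ℝ → ℝ} (hh : OPDiffeo h) (hg : ContDiff ℝ 1 g) (hgh : LeftInverse g h)
    (hhg : RightInverse g h) : OPDiffeo g := by
  refine ⟨hg, ⟨hhg.injective, hgh.surjective⟩, ⟨h, hh.1, hhg, hgh⟩, fun x => ?_⟩
  obtain ⟨t, rfl⟩ := hhg.surjective x
  have hchain : deriv g (h t) * deriv h t = 1 := by
    rw [← deriv_comp t (hg.differentiable one_ne_zero _) (hh.1.differentiable one_ne_zero t)]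
    simp [show g ∘ h = id from funext hgh]
  exact pos_of_mul_pos_left (hchain ▸ one_pos) (hh.2.2.2 t).le

theorem neg_comp_neg (hh : OPDiffeo h) : OPDiffeo fun s => -h (-s) := by
  obtain ⟨hd, hbij, ⟨g, hg, hgh, hhg⟩, hpos⟩ := hh
  refine ⟨(hd.comp contDiff_neg).neg, ?_, ⟨fun s => -g (-s), (hg.comp contDiff_neg).neg, ?_, ?_⟩,
    fun s => ?_⟩
  · exact ⟨fun s t hst => by simpa using hbij.1 (neg_injective hst),
      fun y => ⟨-g (-y), by simp [hhg (-y)]⟩⟩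
  · intro s; simp [hgh (-s)]
  · intro s; simp [hhg (-s)]
  · rw [deriv.fun_neg, deriv_comp_neg, neg_neg]; exact hpos (-s)

end OPDiffeo

theorem integral_mul_deriv_comp_exchange {φ ψ h g : ℝ → ℝ} (hφ : AS1 φ) (hψ : AS1 ψ)
    (hh : OPDiffeo h) (hg : OPDiffeo g) (hgh : LeftInverse g h) :
    ∫ t, ψ (-t) * deriv (φ ∘ fun s => -g (-s)) t = ∫ t, φ (-t) * deriv (ψ ∘ h) t := by
  set Φ : ℝ → ℝ := fun x => φ (-g x)
  have hΦ_contDiff : ContDiff ℝ 1 Φ := hφ.1.comp hg.1.neg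
  have hΦ_atTop : Φ =ᶠ[atTop] 0 :=
    hφ.eventuallyEq_zero_atBot.comp_tendsto (tendsto_neg_atTop_atBot.comp hg.tendsto_atTop)
  obtain ⟨c, hφ_atTop⟩ := hφ.eventuallyEq_atTop
  have hΦ_atBot : Φ =ᶠ[atBot] fun _ => c :=
    hφ_atTop.comp_tendsto (tendsto_neg_atBot_atTop.comp hg.tendsto_atBot)
  have hψΦ : HasCompactSupport (ψ * Φ) := hasCompactSupport_of_eventuallyEq_zero
    (by filter_upwards [hψ.eventuallyEq_zero_atBot] with x hx; simp [hx])
    (by filter_upwards [hΦ_atTop] with x hx; simp [hx])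
  calc ∫ t, ψ (-t) * deriv (φ ∘ fun s => -g (-s)) t
      = ∫ t, -(ψ (-t) * deriv Φ (-t)) := by
        congr 1 with t
        rw [show φ ∘ (fun s => -g (-s)) = fun t => Φ (-t) from rfl, deriv_comp_neg, mul_neg]
    _ = -∫ x, ψ x * deriv Φ x := by
        rw [integral_neg, integral_neg_eq_self (fun x => ψ x * deriv Φ x)]
    _ = ∫ x, Φ x * deriv ψ x := by
        rw [integral_mul_deriv_eq_neg_integral_deriv_mul hψ.1 hΦ_contDiff hψ.hasCompactSupport_deriv
          (hasCompactSupport_deriv_of_eventuallyEq hΦ_atBot hΦ_atTop) hψΦ, neg_neg]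
        exact integral_congr_ae (Eventually.of_forall fun x => mul_comm _ _)
    _ = ∫ t, φ (-t) * deriv (ψ ∘ h) t :=
        (integral_mul_deriv_comp_eq (fun t => φ (-t)) (hh.1.differentiable one_ne_zero)
          hh.strictMono hh.2.1.2 hgh (hψ.1.differentiable one_ne_zero)).symm

theorem exists_opDiffeo_integral_exchange {φ ψ h : ℝ → ℝ} (hφ : AS1 φ) (hψ : AS1 ψ)
    (hh : OPDiffeo h) :
    ∃ k, OPDiffeo k ∧ ∫ t, ψ (-t) * deriv (φ ∘ k) t = ∫ t, φ (-t) * deriv (ψ ∘ h) t := by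
  obtain ⟨g, hg, hgh, hhg⟩ := hh.2.2.1
  have hg_diffeo := hh.of_inverse hg hgh hhg
  exact ⟨_, hg_diffeo.neg_comp_neg, integral_mul_deriv_comp_exchange hφ hψ hh hg_diffeo hgh⟩

theorem stdNorm_comm {φ ψ : ℝ → ℝ} (hφ : AS1 φ) (hψ : AS1 ψ) : stdNorm ψ φ = stdNorm φ ψ := by
  refine iSup_eq_iSup_of_forall_exists (fun h => ?_) (fun k => ?_)
  · obtain ⟨k, hk, heq⟩ := exists_opDiffeo_integral_exchange hφ hψ h.2
    exact ⟨⟨k, hk⟩, by rw [heq]⟩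
  · obtain ⟨h, hh, heq⟩ := exists_opDiffeo_integral_exchange hψ hφ k.2
    exact ⟨⟨h, hh⟩, by rw [heq]⟩

theorem stdNorm_neg (ψ φ : ℝ → ℝ) : stdNorm (fun t => -ψ t) φ = stdNorm ψ φ := by
  refine iSup_congr fun h => ?_
  simp only [Function.comp_def, deriv.fun_neg, mul_neg, integral_neg, abs_neg]

theorem statement8_general (φ ψ : ℝ → ℝ) (hφ : AS1 φ) (hψ : AS1 ψ) :
    stdNorm ψ φ = stdNorm φ ψ ∧ stdNorm ψ φ = stdNorm (fun t => -ψ t) φ :=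
  ⟨stdNorm_comm hφ hψ, (stdNorm_neg ψ φ).symm⟩

theorem statement8 (φ ψ : ℝ → ℝ) (hφ : AS1 φ) (hψ : AS1 ψ)
    (hφ0 : ¬ ∀ t, φ t = 0) (hψ0 : ¬ ∀ t, ψ t = 0) :
    stdNorm ψ φ = stdNorm φ ψ ∧ stdNorm ψ φ = stdNorm (fun t => -ψ t) φ :=
  statement8_general φ ψ hφ hψ
end
end
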